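/- Let d ≥ 2 be an integer and let α = 2/(d+1). For λ > 0 set u_λ = κ_d^{−1/(d+1)} λ^{1/(d+1)}. Then for every fixed h ≥ 0, lim_{λ → ∞} φ_{λ,α,u_λ}(h) = s₁( κ_d^{2/(d+1)} · h ). -/

import Mathlib

open MeasureTheory Real Filter

/-- `kappa j` is the Lebesgue volume of the unit ball in `ℝ^j`. -/
noncomputable def kappa (j : ℕ) : ℝ :=
  (volume (Metric.ball (0 : EuclideanSpace ℝ (Fin j)) 1)).toReal

/-- Normalized surface area `s₁` of a spherical cap of height `h` (equals `1` for `h > 2`). -/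
noncomputable def s1 (d : ℕ) (h : ℝ) : ℝ :=
  if h ≤ 2 then
    (((d : ℝ) - 1) * kappa (d - 1) / ((d : ℝ) * kappa d)) *
      ∫ θ in (0:ℝ)..(Real.arccos (1 - h)), (Real.sin θ) ^ (d - 2)
  else 1

/-- The function `g_{λ,α,u}(h)`. -/
noncomputable def gfun (lam al u h : ℝ) : ℝ :=
  min (max ((lam ^ al / u ^ 2 * h - (1 / 2) * (1 + lam ^ al) / u ^ 4 * h ^ 2) /
      (1 - h / u ^ 2)) 0) 2

/-- The density `φ_{λ,α,u}(h)`. -/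
noncomputable def phi (d : ℕ) (lam al u h : ℝ) : ℝ :=
  lam * (1 + lam ^ al) ^ d / u ^ (d + 1) / (kappa d * lam ^ ((d : ℝ) * al)) *
    s1 d (gfun lam al u h) * (1 - h / u ^ 2) ^ (d - 1)

open Topology

/-!
With `c = κ_d^{2/(d+1)}` and `y = λ^{-2/(d+1)}`, the choice of `u_λ` makes `λ^α u^{-2} = c`,
`u^{-2} = c y` and `λ u^{-(d+1)} = κ_d` exactly, so `φ_{λ,α,u_λ}(h)` is a fixed function of `y`
which is continuous at `y = 0`, where it equals `s₁(min(c h, 2)) = s₁(c h)`. Continuity of `s₁` at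
the height `2` is the normalisation `(n+1) κ_{n+1} ∫₀^π sin^n = (n+2) κ_{n+2}`, proved by
two-step induction from the Wallis recursion and `(j+2) κ_{j+2} = 2π κ_j`.
-/

lemma kappa_eq_Gamma {j : ℕ} (hj : j ≠ 0) : kappa j = √π ^ j / Gamma (j / 2 + 1) := by
  have : Nonempty (Fin j) := Fin.pos_iff_nonempty.mp (Nat.pos_of_ne_zero hj)
  rw [kappa, EuclideanSpace.volume_ball, Fintype.card_fin, ENNReal.ofReal_one, one_pow, one_mul,
    ENNReal.toReal_ofReal (by positivity)]

lemma kappa_pos {j : ℕ} (hj : j ≠ 0) : 0 < kappa j := by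
  rw [kappa_eq_Gamma hj]
  positivity

lemma kappa_one : kappa 1 = 2 := by
  rw [kappa_eq_Gamma one_ne_zero, Nat.cast_one, Gamma_add_one (by norm_num), Gamma_one_half_eq]
  field_simp

lemma kappa_two : kappa 2 = π := by
  rw [kappa_eq_Gamma two_ne_zero, Nat.cast_ofNat, div_self two_ne_zero, Gamma_add_one one_ne_zero,
    Gamma_one, sq_sqrt pi_pos.le, mul_one, div_one]

lemma add_two_mul_kappa_add_two {j : ℕ} (hj : j ≠ 0) :
    ((j : ℝ) + 2) * kappa (j + 2) = 2 * π * kappa j := by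
  have hΓ : ((j + 2 : ℕ) : ℝ) / 2 + 1 = ((j : ℝ) / 2 + 1) + 1 := by push_cast; ring
  rw [kappa_eq_Gamma hj, kappa_eq_Gamma (by omega), hΓ, Gamma_add_one (by positivity), pow_add,
    sq_sqrt pi_pos.le]
  have : Gamma ((j : ℝ) / 2 + 1) ≠ 0 := (Gamma_pos_of_pos (by positivity)).ne'
  field_simp

lemma add_one_mul_kappa_mul_integral_sin_pow (n : ℕ) :
    ((n : ℝ) + 1) * kappa (n + 1) * ∫ θ in (0 : ℝ)..π, sin θ ^ n
      = ((n : ℝ) + 2) * kappa (n + 2) := by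
  induction n using Nat.twoStepInduction with
  | zero => simp [kappa_one, kappa_two]
  | one =>
    have hκ3 := add_two_mul_kappa_add_two one_ne_zero
    simp only [pow_one, integral_sin, cos_zero, cos_pi] at hκ3 ⊢
    push_cast at hκ3 ⊢
    rw [hκ3, kappa_one, kappa_two]
    ring
  | more n ih _ =>
    have hn1 : ((n : ℝ) + 3) * kappa (n + 3) = 2 * π * kappa (n + 1) := by
      convert add_two_mul_kappa_add_two n.succ_ne_zero using 2; push_cast; ring
    have hn2 : ((n : ℝ) + 4) * kappa (n + 4) = 2 * π * kappa (n + 2) := by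
      convert add_two_mul_kappa_add_two (j := n + 2) (by omega) using 2; push_cast; ring
    have hwallis := integral_sin_pow (a := 0) (b := π) n
    simp only [sin_zero, sin_pi, zero_pow n.succ_ne_zero, zero_mul, sub_zero, zero_div,
      zero_add] at hwallis
    show ((n + 2 : ℕ) + 1 : ℝ) * kappa (n + 3) * ∫ θ in (0 : ℝ)..π, sin θ ^ (n + 2)
      = ((n + 2 : ℕ) + 2 : ℝ) * kappa (n + 4)
    rw [hwallis]
    have : (n : ℝ) + 2 ≠ 0 := by positivity
    push_cast
    field_simp
    linear_combination ((n : ℝ) + 1) * (∫ θ in (0 : ℝ)..π, sin θ ^ n) * hn1 + 2 * π * ih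
      - ((n : ℝ) + 2) * hn2

section CapArea

variable {d : ℕ}

lemma capArea_normalization (hd : 2 ≤ d) :
    ((d : ℝ) - 1) * kappa (d - 1) / ((d : ℝ) * kappa d) * ∫ θ in (0 : ℝ)..π, sin θ ^ (d - 2)
      = 1 := by
  obtain ⟨n, rfl⟩ : ∃ n, d = n + 2 := ⟨d - 2, by omega⟩
  have hκ := kappa_pos (j := n + 2) (by omega)
  rw [show n + 2 - 1 = n + 1 by omega, Nat.add_sub_cancel, div_mul_eq_mul_div,
    div_eq_one_iff_eq (by positivity)]
  push_cast
  linear_combination add_one_mul_kappa_mul_integral_sin_pow n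

lemma s1_eq_integral (hd : 2 ≤ d) (x : ℝ) :
    s1 d x = ((d : ℝ) - 1) * kappa (d - 1) / ((d : ℝ) * kappa d) *
      ∫ θ in (0 : ℝ)..arccos (1 - x), sin θ ^ (d - 2) := by
  rw [s1]
  split_ifs with hx
  · rfl
  · rw [arccos_of_le_neg_one (by linarith), capArea_normalization hd]

lemma s1_of_two_le (hd : 2 ≤ d) {x : ℝ} (hx : 2 ≤ x) : s1 d x = 1 := by
  rw [s1_eq_integral hd, arccos_of_le_neg_one (by linarith), capArea_normalization hd]

lemma continuous_s1 (hd : 2 ≤ d) : Continuous (s1 d) := by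
  rw [funext (s1_eq_integral hd)]
  refine continuous_const.mul ?_
  exact (intervalIntegral.continuous_primitive
      (fun a b => ((continuous_sin.pow _).intervalIntegrable a b)) 0).comp
    (continuous_arccos.comp (continuous_const.sub continuous_id))

lemma s1_min_max_of_nonneg (hd : 2 ≤ d) {x : ℝ} (hx : 0 ≤ x) :
    s1 d (min (max x 0) 2) = s1 d x := by
  rw [max_eq_left hx]
  rcases le_total x 2 with hx2 | hx2
  · rw [min_eq_left hx2]
  · rw [min_eq_right hx2, s1_of_two_le hd le_rfl, s1_of_two_le hd hx2]

end CapArea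

noncomputable def criticalProfile (d : ℕ) (c h y : ℝ) : ℝ :=
  (1 + y) ^ d *
    s1 d (min (max ((c * h - c ^ 2 * (y + y ^ 2) * h ^ 2 / 2) / (1 - c * h * y)) 0) 2) *
    (1 - c * h * y) ^ (d - 1)

lemma tendsto_criticalProfile_zero {d : ℕ} (hd : 2 ≤ d) {c h : ℝ} (hch : 0 ≤ c * h) :
    Tendsto (criticalProfile d c h) (𝓝 0) (𝓝 (s1 d (c * h))) := by
  have hcont : ContinuousAt (criticalProfile d c h) 0 := by
    have harg : ContinuousAt
        (fun y : ℝ => (c * h - c ^ 2 * (y + y ^ 2) * h ^ 2 / 2) / (1 - c * h * y)) 0 :=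
      ContinuousAt.div (by fun_prop) (by fun_prop) (by norm_num)
    exact ((by fun_prop : ContinuousAt (fun y : ℝ => (1 + y) ^ d) 0).mul
      ((continuous_s1 hd).continuousAt.comp ((harg.max continuousAt_const).min
        continuousAt_const))).mul (by fun_prop)
  simpa [criticalProfile, s1_min_max_of_nonneg hd hch] using hcont.tendsto

lemma phi_critical_eq {d : ℕ} (hd : d ≠ 0) (h : ℝ) {lam : ℝ} (hlam : 0 < lam) :
    phi d lam (2 / ((d : ℝ) + 1))
        (kappa d ^ (-(1 : ℝ) / ((d : ℝ) + 1)) * lam ^ ((1 : ℝ) / ((d : ℝ) + 1))) h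
      = criticalProfile d (kappa d ^ ((2 : ℝ) / ((d : ℝ) + 1))) h
          (lam ^ (-(2 / ((d : ℝ) + 1)))) := by
  set p : ℝ := (d : ℝ) + 1
  have hp : p ≠ 0 := by positivity
  have hκ : 0 < kappa d := kappa_pos hd
  set c := kappa d ^ (2 / p)
  have hc : 0 < c := by positivity
  set B := lam ^ (2 / p) with hB_def
  have hB : 0 < B := by positivity
  have hu (n : ℕ) : (kappa d ^ (-1 / p) * lam ^ (1 / p)) ^ n
      = (kappa d ^ (n / p))⁻¹ * lam ^ (n / p) := by
    rw [mul_pow, ← rpow_mul_natCast hκ.le, ← rpow_mul_natCast hlam.le, ← rpow_neg hκ.le]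
    ring_nf
  have hu2 : (kappa d ^ (-1 / p) * lam ^ (1 / p)) ^ 2 = B / c := by
    rw [hu, Nat.cast_ofNat, div_eq_inv_mul B]
  have hu4 : (kappa d ^ (-1 / p) * lam ^ (1 / p)) ^ 4 = (B / c) ^ 2 := by
    rw [show 4 = 2 * 2 from rfl, pow_mul, hu2]
  have hud : (kappa d ^ (-1 / p) * lam ^ (1 / p)) ^ (d + 1) = lam / kappa d := by
    rw [hu, Nat.cast_succ, div_self hp, rpow_one, rpow_one, div_eq_inv_mul]
  have hlamd : lam ^ ((d : ℝ) * (2 / p)) = B ^ d := by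
    rw [mul_comm, rpow_mul hlam.le, rpow_natCast]
  have hcoef : B / (B / c) * h - 1 / 2 * (1 + B) / (B / c) ^ 2 * h ^ 2
      = c * h - c ^ 2 * (B⁻¹ + B⁻¹ ^ 2) * h ^ 2 / 2 := by
    field_simp
    ring
  have hdenom : h / (B / c) = c * h * B⁻¹ := by
    field_simp
  have hprefactor : lam * (1 + B) ^ d / (lam / kappa d) / (kappa d * B ^ d) = (1 + B⁻¹) ^ d := by
    rw [show 1 + B⁻¹ = (1 + B) / B by field_simp; ring, div_pow]
    field_simp
  rw [phi, gfun, criticalProfile, hu2, hu4, hud, hlamd, rpow_neg hlam.le, ← hB_def, hcoef,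
    hdenom, hprefactor]

/-- for `α = 2/(d+1)` and `u_λ = κ_d^{-1/(d+1)} λ^{1/(d+1)}`,
`φ_{λ,α,u_λ}(h) → s₁(κ_d^{2/(d+1)} h)` for every fixed `h ≥ 0`. -/
theorem phi_limit_critical_upper (d : ℕ) (hd : 2 ≤ d) (h : ℝ) (hh : 0 ≤ h) :
    Tendsto (fun lam : ℝ =>
        phi d lam (2 / ((d : ℝ) + 1))
          (kappa d ^ (-(1 : ℝ) / ((d : ℝ) + 1)) * lam ^ ((1 : ℝ) / ((d : ℝ) + 1))) h)
      atTop (nhds (s1 d (kappa d ^ ((2 : ℝ) / ((d : ℝ) + 1)) * h))) := by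
  have hκ : 0 < kappa d := kappa_pos (by omega)
  have hy : Tendsto (fun lam : ℝ => lam ^ (-(2 / ((d : ℝ) + 1)))) atTop (𝓝 0) :=
    tendsto_rpow_neg_atTop (by positivity)
  refine ((tendsto_criticalProfile_zero hd (by positivity)).comp hy).congr' ?_
  filter_upwards [eventually_gt_atTop 0] with lam hlam
  exact (phi_critical_eq (by omega) h hlam).symm
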